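/- Let α ∈ ℝ and let A be the algebraic curvature tensor on V whose nonvanishing components relative to the standard basis (up to the curvature symmetries) are A₁₂₂₁ = A₄₃₃₄ = α, A₁₃₃₁ = A₄₂₂₄ = −α, A₁₄₄₁ = A₃₂₂₃ = −α, A₂₁₁₄ = A₂₃₃₄ = −√2/2, A₃₁₁₄ = −A₃₂₂₄ = √2/2, A₁₂₂₃ = A₁₄₄₃ = A₁₃₃₂ = −A₁₄₄₂ = √2/2 (a Type III spacelike Osserman tensor). Then for the null vectors u = e₂ − e₃ and v = e₂ + e₃ one has rank(J_A(u)) = 2 and rank(J_A(v)) ≤ 1; hence the model 𝔐 = (V,⟨·,·⟩,A) is not null Jordan Osserman. -/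

import Mathlib

open Matrix BigOperators

/-- `V = ℝ⁴`. -/
abbrev V4 : Type := Fin 4 → ℝ

/-- The neutral inner product of signature (2,2):
`⟨x,y⟩ = −x₁y₁ − x₂y₂ + x₃y₃ + x₄y₄`. -/
def nip (x y : V4) : ℝ := -(x 0 * y 0) - x 1 * y 1 + x 2 * y 2 + x 3 * y 3

/-- The signs `ε₁ = ε₂ = −1`, `ε₃ = ε₄ = 1`. -/
def eps : Fin 4 → ℝ := ![-1, -1, 1, 1]

/-- The standard basis vectors `e i`. -/
def stdb (i : Fin 4) : V4 := fun j => if j = i then 1 else 0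

/-- A 4-linear map `A : V⁴ → ℝ` (linearity in each slot). -/
def IsMultilinear (A : V4 → V4 → V4 → V4 → ℝ) : Prop :=
  (∀ (c : ℝ) (x x' y z w : V4), A (c • x + x') y z w = c * A x y z w + A x' y z w) ∧
  (∀ (c : ℝ) (x y y' z w : V4), A x (c • y + y') z w = c * A x y z w + A x y' z w) ∧
  (∀ (c : ℝ) (x y z z' w : V4), A x y (c • z + z') w = c * A x y z w + A x y z' w) ∧
  (∀ (c : ℝ) (x y z w w' : V4), A x y z (c • w + w') = c * A x y z w + A x y z w')

/-- Curvature symmetries: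
`A(x,y,z,v) = −A(y,x,z,v) = A(z,v,x,y)` and the first Bianchi identity. -/
def HasCurvSym (A : V4 → V4 → V4 → V4 → ℝ) : Prop :=
  (∀ x y z w, A x y z w = - A y x z w) ∧
  (∀ x y z w, A x y z w = A z w x y) ∧
  (∀ x y z w, A x y z w + A y z x w + A z x y w = 0)

/-- An algebraic curvature tensor on `(V,⟨·,·⟩)`. -/
def IsModel (A : V4 → V4 → V4 → V4 → ℝ) : Prop := IsMultilinear A ∧ HasCurvSym A

/-- The Jacobi operator `J_A(x)`, as a matrix: it is the unique linear map with
`⟨J_A(x)y, z⟩ = A(y,x,x,z)`; its matrix entries are `J i j = ε i * A(e j, x, x, e i)`. -/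
def jacobi (A : V4 → V4 → V4 → V4 → ℝ) (x : V4) : Matrix (Fin 4) (Fin 4) ℝ :=
  Matrix.of fun i j => eps i * A (stdb j) x x (stdb i)

/-- Two endomorphisms of `V` are similar (conjugate by an invertible linear map). -/
def SimilarM (M N : Matrix (Fin 4) (Fin 4) ℝ) : Prop :=
  ∃ L : Matrix (Fin 4) (Fin 4) ℝ, IsUnit L.det ∧ M * L = L * N

/-- Spacelike Osserman: the characteristic polynomial of `J_A` is constant on
unit spacelike vectors. -/
def SpacelikeOsserman (A : V4 → V4 → V4 → V4 → ℝ) : Prop :=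
  ∀ u w : V4, nip u u = 1 → nip w w = 1 → (jacobi A u).charpoly = (jacobi A w).charpoly

/-- Timelike Osserman: the characteristic polynomial of `J_A` is constant on
unit timelike vectors. -/
def TimelikeOsserman (A : V4 → V4 → V4 → V4 → ℝ) : Prop :=
  ∀ u w : V4, nip u u = -1 → nip w w = -1 → (jacobi A u).charpoly = (jacobi A w).charpoly

/-- Null Osserman: `J_A(v)` is nilpotent for every null vector `v`. -/
def NullOsserman (A : V4 → V4 → V4 → V4 → ℝ) : Prop :=
  ∀ v : V4, nip v v = 0 → IsNilpotent (jacobi A v)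

/-- Spacelike Jordan Osserman: the Jordan normal form of `J_A` is constant on
unit spacelike vectors. -/
def SpacelikeJordanOsserman (A : V4 → V4 → V4 → V4 → ℝ) : Prop :=
  ∀ u w : V4, nip u u = 1 → nip w w = 1 → SimilarM (jacobi A u) (jacobi A w)

/-- Timelike Jordan Osserman. -/
def TimelikeJordanOsserman (A : V4 → V4 → V4 → V4 → ℝ) : Prop :=
  ∀ u w : V4, nip u u = -1 → nip w w = -1 → SimilarM (jacobi A u) (jacobi A w)

/-- Null Jordan Osserman: the Jordan normal form of `J_A` is constant on
nonzero null vectors. -/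
def NullJordanOsserman (A : V4 → V4 → V4 → V4 → ℝ) : Prop :=
  ∀ u w : V4, u ≠ 0 → w ≠ 0 → nip u u = 0 → nip w w = 0 →
    SimilarM (jacobi A u) (jacobi A w)

/-- The Ricci tensor `ρ_A(x,y) = Σᵢ εᵢ A(eᵢ,x,y,eᵢ)`. -/
def ricci (A : V4 → V4 → V4 → V4 → ℝ) (x y : V4) : ℝ :=
  ∑ i : Fin 4, eps i * A (stdb i) x y (stdb i)

/-- Einstein: `ρ_A = c⟨·,·⟩`. -/
def Einstein (A : V4 → V4 → V4 → V4 → ℝ) : Prop :=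
  ∃ c : ℝ, ∀ x y : V4, ricci A x y = c * nip x y

/-- The scalar curvature `τ_A = Σᵢ εᵢ ρ_A(eᵢ,eᵢ)`. -/
def scal (A : V4 → V4 → V4 → V4 → ℝ) : ℝ :=
  ∑ i : Fin 4, eps i * ricci A (stdb i) (stdb i)

/-- The Weyl tensor. -/
noncomputable def weyl (A : V4 → V4 → V4 → V4 → ℝ) (x y z v : V4) : ℝ :=
  A x y z v + (scal A / 6) * (nip y z * nip x v - nip x z * nip y v)
    - (1/2) * (ricci A y z * nip x v - ricci A x z * nip y v
        + ricci A x v * nip y z - ricci A y v * nip x z)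

/-- A 2-vector `x ∧ y`, represented by its antisymmetric coefficient matrix. -/
def wedge (x y : V4) : Matrix (Fin 4) (Fin 4) ℝ :=
  Matrix.of fun i j => x i * y j - x j * y i

/-- The Weyl tensor as a symmetric bilinear form on 2-vectors, determined by
`W_A(x∧y, z∧v) = W_A(x,y,z,v)`. -/
noncomputable def weylForm (A : V4 → V4 → V4 → V4 → ℝ) (α β : Matrix (Fin 4) (Fin 4) ℝ) : ℝ :=
  (1/4) * ∑ i : Fin 4, ∑ j : Fin 4, ∑ k : Fin 4, ∑ l : Fin 4,
    α i j * β k l * weyl A (stdb i) (stdb j) (stdb k) (stdb l)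

/-- `E₁^ε = (1/√2)(e₁∧e₂ + ε e₃∧e₄)`, `E₂^ε = (1/√2)(e₁∧e₃ + ε e₂∧e₄)`,
`E₃^ε = (1/√2)(e₁∧e₄ − ε e₂∧e₃)`.  For `ε = 1` this is the standard basis of the
self-dual 2-vectors `Λ⁺`; for `ε = −1`, of the anti-self-dual 2-vectors `Λ⁻`. -/
noncomputable def Evec (ε : ℝ) : Fin 3 → Matrix (Fin 4) (Fin 4) ℝ :=
  ![(Real.sqrt 2)⁻¹ • (wedge (stdb 0) (stdb 1) + ε • wedge (stdb 2) (stdb 3)),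
    (Real.sqrt 2)⁻¹ • (wedge (stdb 0) (stdb 2) + ε • wedge (stdb 1) (stdb 3)),
    (Real.sqrt 2)⁻¹ • (wedge (stdb 0) (stdb 3) - ε • wedge (stdb 1) (stdb 2))]

/-- The space `Λ⁺` of self-dual 2-vectors. -/
def LambdaPlus : Submodule ℝ (Matrix (Fin 4) (Fin 4) ℝ) :=
  Submodule.span ℝ (Set.range (Evec 1))

/-- The space `Λ⁻` of anti-self-dual 2-vectors. -/
def LambdaMinus : Submodule ℝ (Matrix (Fin 4) (Fin 4) ℝ) :=
  Submodule.span ℝ (Set.range (Evec (-1)))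

/-- Self-dual: the Weyl form vanishes identically on `Λ⁻`. -/
def SelfDual (A : V4 → V4 → V4 → V4 → ℝ) : Prop :=
  ∀ α ∈ LambdaMinus, ∀ β ∈ LambdaMinus, weylForm A α β = 0

/-- Anti-self-dual: the Weyl form vanishes identically on `Λ⁺`. -/
def AntiSelfDual (A : V4 → V4 → V4 → V4 → ℝ) : Prop :=
  ∀ α ∈ LambdaPlus, ∀ β ∈ LambdaPlus, weylForm A α β = 0

/-- The curvature tensor `A⁰` of constant sectional curvature `+1`. -/
def Acurv0 (x y z v : V4) : ℝ := nip y z * nip x v - nip x z * nip y v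

/-- The curvature tensor `A^Ψ` of a skew-adjoint endomorphism `Ψ`. -/
def AcurvPsi (Ψ : Matrix (Fin 4) (Fin 4) ℝ) (x y z v : V4) : ℝ :=
  nip (Ψ.mulVec y) z * nip (Ψ.mulVec x) v - nip (Ψ.mulVec x) z * nip (Ψ.mulVec y) v
    - 2 * nip (Ψ.mulVec x) y * nip (Ψ.mulVec z) v

/-- Skew-adjoint with respect to the neutral inner product. -/
def SkewAdjointM (Ψ : Matrix (Fin 4) (Fin 4) ℝ) : Prop :=
  ∀ x y : V4, nip (Ψ.mulVec x) y = - nip x (Ψ.mulVec y)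

/-- An orthogonal complex structure: skew-adjoint with `J² = −id`. -/
def OrthComplexStructure (J : Matrix (Fin 4) (Fin 4) ℝ) : Prop :=
  SkewAdjointM J ∧ J * J = -1

/-- An adapted paracomplex structure: skew-adjoint with `P² = id`. -/
def AdaptedParaStructure (P : Matrix (Fin 4) (Fin 4) ℝ) : Prop :=
  SkewAdjointM P ∧ P * P = 1

/-- A paraquaternionic structure. -/
def Paraquaternionic (P₁ P₂ P₃ : Matrix (Fin 4) (Fin 4) ℝ) : Prop :=
  SkewAdjointM P₁ ∧ SkewAdjointM P₂ ∧ SkewAdjointM P₃ ∧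
  P₁ * P₁ = -1 ∧ P₂ * P₂ = 1 ∧ P₃ * P₃ = 1 ∧
  P₁ * P₂ + P₂ * P₁ = 0 ∧ P₁ * P₃ + P₃ * P₁ = 0 ∧ P₂ * P₃ + P₃ * P₂ = 0

/-- The standard paraquaternionic structure: `Ψ₁`. -/
def psi1 : Matrix (Fin 4) (Fin 4) ℝ :=
  !![0, 1, 0, 0; -1, 0, 0, 0; 0, 0, 0, -1; 0, 0, 1, 0]

/-- The standard paraquaternionic structure: `Ψ₂`. -/
def psi2 : Matrix (Fin 4) (Fin 4) ℝ :=
  !![0, 0, 1, 0; 0, 0, 0, 1; 1, 0, 0, 0; 0, 1, 0, 0]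

/-- The standard paraquaternionic structure: `Ψ₃`. -/
def psi3 : Matrix (Fin 4) (Fin 4) ℝ :=
  !![0, 0, 0, 1; 0, 0, -1, 0; 0, -1, 0, 0; 1, 0, 0, 0]

/-- The curvature tensor `A_{κ₀,ξ}` of the Gilkey–Ivanova ansatz. -/
noncomputable def AKxi (κ₀ ξ11 ξ12 ξ13 ξ22 ξ23 ξ33 : ℝ) : V4 → V4 → V4 → V4 → ℝ :=
  fun x y z w =>
    κ₀ * Acurv0 x y z w + (1/3) *
      (ξ11 * AcurvPsi psi1 x y z w + ξ22 * AcurvPsi psi2 x y z w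
        + ξ33 * AcurvPsi psi3 x y z w + ξ12 * AcurvPsi (psi1 + psi2) x y z w
        + ξ13 * AcurvPsi (psi1 + psi3) x y z w + ξ23 * AcurvPsi (psi2 + psi3) x y z w)

/-- The `3 × 3` matrix `𝒥_{κ₀,ξ}`. -/
def Jmat (κ₀ ξ11 ξ12 ξ13 ξ22 ξ23 ξ33 : ℝ) : Matrix (Fin 3) (Fin 3) ℝ :=
  κ₀ • (1 : Matrix (Fin 3) (Fin 3) ℝ) +
    !![ξ11 + ξ12 + ξ13, -ξ12, -ξ13;
       ξ12, -ξ22 - ξ12 - ξ23, -ξ23;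
       ξ13, -ξ23, -ξ33 - ξ13 - ξ23]

/-- An oriented orthonormal basis of `(V,⟨·,·⟩)`: `b₁, b₂` timelike, `b₃, b₄` spacelike,
mutually orthogonal, with positively-oriented change-of-basis matrix. -/
def OrientedONB (b : Fin 4 → V4) : Prop :=
  (∀ i j : Fin 4, nip (b i) (b j) = if i = j then eps i else 0) ∧
  0 < (Matrix.of fun i j : Fin 4 => b j i).det


/-- Component tensor of the Type III example. -/
noncomputable def TypeIIIComp (α s2 : ℝ) : Fin 4 → Fin 4 → Fin 4 → Fin 4 → ℝ := fun i j k l =>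
  ![
    ![
      !![0, 0, 0, 0;
         0, 0, 0, 0;
         0, 0, 0, 0;
         0, 0, 0, 0],
      !![0, -α, 0, s2;
         α, 0, s2, 0;
         0, -s2, 0, 0;
         -s2, 0, 0, 0],
      !![0, 0, α, -s2;
         0, 0, -s2, 0;
         -α, s2, 0, 0;
         s2, 0, 0, 0],
      !![0, s2, -s2, α;
         -s2, 0, 0, s2;
         s2, 0, 0, -s2;
         -α, -s2, s2, 0]
    ],
    ![
      !![0, α, 0, -s2;
         -α, 0, -s2, 0;
         0, s2, 0, 0;
         s2, 0, 0, 0],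
      !![0, 0, 0, 0;
         0, 0, 0, 0;
         0, 0, 0, 0;
         0, 0, 0, 0],
      !![0, s2, -s2, 0;
         -s2, 0, α, s2;
         s2, -α, 0, -s2;
         0, -s2, s2, 0],
      !![0, 0, 0, s2;
         0, 0, s2, α;
         0, -s2, 0, 0;
         -s2, -α, 0, 0]
    ],
    ![
      !![0, 0, -α, s2;
         0, 0, s2, 0;
         α, -s2, 0, 0;
         -s2, 0, 0, 0],
      !![0, -s2, s2, 0;
         s2, 0, -α, -s2;
         -s2, α, 0, s2;
         0, s2, -s2, 0],
      !![0, 0, 0, 0;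
         0, 0, 0, 0;
         0, 0, 0, 0;
         0, 0, 0, 0],
      !![0, 0, 0, -s2;
         0, 0, -s2, 0;
         0, s2, 0, -α;
         s2, 0, α, 0]
    ],
    ![
      !![0, -s2, s2, -α;
         s2, 0, 0, -s2;
         -s2, 0, 0, s2;
         α, s2, -s2, 0],
      !![0, 0, 0, -s2;
         0, 0, -s2, -α;
         0, s2, 0, 0;
         s2, α, 0, 0],
      !![0, 0, 0, s2;
         0, 0, s2, 0;
         0, -s2, 0, α;
         -s2, 0, -α, 0],
      !![0, 0, 0, 0;
         0, 0, 0, 0;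
         0, 0, 0, 0;
         0, 0, 0, 0]
    ]
  ] i j k l

/-!
Expanding the quadratic dependence of `J_A(x)` on `x = c e₃ + e₂`, the components give
`J_A(e₂ − e₃)` with a nonsingular `2 × 2` minor and only two independent rows, and
`J_A(e₂ + e₃)` an outer product. Similar matrices have equal rank, so `J_A` at these two
nonzero null vectors cannot be conjugate.
-/

lemma SimilarM.rank_eq {M N : Matrix (Fin 4) (Fin 4) ℝ} (h : SimilarM M N) :
    M.rank = N.rank := by
  obtain ⟨L, hL, hML⟩ := h
  rw [← rank_mul_eq_left_of_isUnit_det L M hL, hML, rank_mul_eq_right_of_isUnit_det L N hL]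

lemma IsMultilinear.jacobi_smul_add_apply {A : V4 → V4 → V4 → V4 → ℝ}
    (hA : IsMultilinear A) (c : ℝ) (x y : V4) (i j : Fin 4) :
    jacobi A (c • x + y) i j = eps i *
      (c * (c * A (stdb j) x x (stdb i) + A (stdb j) x y (stdb i))
        + (c * A (stdb j) y x (stdb i) + A (stdb j) y y (stdb i))) := by
  rw [jacobi, of_apply, hA.2.1, hA.2.2.1, hA.2.2.1]

def typeIIIJacobiSub (α t : ℝ) : Matrix (Fin 4) (Fin 4) ℝ :=
  !![0, -t, -t, 0;
     -t, α, α, t;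
     t, -α, -α, -t;
     0, -t, -t, 0]

lemma rank_typeIIIJacobiSub (α : ℝ) {t : ℝ} (ht : t ≠ 0) :
    (typeIIIJacobiSub α t).rank = 2 := by
  apply le_antisymm
  · have hfactor : typeIIIJacobiSub α t =
        (!![1, 0; 0, 1; 0, -1; 1, 0] : Matrix (Fin 4) (Fin 2) ℝ) *
          !![0, -t, -t, 0; -t, α, α, t] := by
      ext i j
      fin_cases i <;> fin_cases j <;> simp [typeIIIJacobiSub, mul_apply, Fin.sum_univ_two]
    rw [hfactor]
    exact ((rank_mul_le_right _ _).trans (rank_le_card_height _)).trans_eq (Fintype.card_fin 2)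
  · have hminor : (typeIIIJacobiSub α t).submatrix ![0, 1] ![0, 1] = !![0, -t; -t, α] := by
      ext i j
      fin_cases i <;> fin_cases j <;> rfl
    have hdet : (!![0, -t; -t, α] : Matrix (Fin 2) (Fin 2) ℝ).det ≠ 0 := by
      simpa [det_fin_two_of] using ht
    calc 2 = (!![0, -t; -t, α] : Matrix (Fin 2) (Fin 2) ℝ).rank := by
          rw [rank_of_det_ne_zero hdet, Fintype.card_fin]
      _ ≤ _ := hminor ▸ rank_submatrix_le _ _ _

section TypeIII

variable {α s : ℝ} {A : V4 → V4 → V4 → V4 → ℝ}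

lemma jacobi_sub_eq_typeIIIJacobiSub (hA : IsMultilinear A)
    (hcomp : ∀ i j k l : Fin 4,
      A (stdb i) (stdb j) (stdb k) (stdb l) = TypeIIIComp α s i j k l) :
    jacobi A (stdb 1 - stdb 2) = typeIIIJacobiSub α (2 * s) := by
  have hu : stdb 1 - stdb 2 = (-1 : ℝ) • stdb 2 + stdb 1 := by
    rw [neg_one_smul, neg_add_eq_sub]
  ext i j
  rw [hu, hA.jacobi_smul_add_apply, hcomp, hcomp, hcomp, hcomp]
  fin_cases i <;> fin_cases j <;> simp only [Fin.zero_eta, Fin.reduceFinMk] <;>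
    simp only [TypeIIIComp, typeIIIJacobiSub, eps, of_apply, cons_val, Fin.isValue] <;> ring

lemma jacobi_add_eq_vecMulVec (hA : IsMultilinear A)
    (hcomp : ∀ i j k l : Fin 4,
      A (stdb i) (stdb j) (stdb k) (stdb l) = TypeIIIComp α s i j k l) :
    jacobi A (stdb 1 + stdb 2) = vecMulVec ![0, α, α, 0] ![0, 1, -1, 0] := by
  have hv : stdb 1 + stdb 2 = (1 : ℝ) • stdb 2 + stdb 1 := by
    rw [one_smul, add_comm]
  ext i j
  rw [hv, hA.jacobi_smul_add_apply, hcomp, hcomp, hcomp, hcomp]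
  fin_cases i <;> fin_cases j <;> simp only [Fin.zero_eta, Fin.reduceFinMk] <;>
    simp only [TypeIIIComp, vecMulVec_apply, eps, of_apply, cons_val, Fin.isValue] <;> ring

end TypeIII

lemma stdb_one_sub_stdb_two_ne_zero : stdb 1 - stdb 2 ≠ 0 := fun h => by
  simpa [stdb] using congrFun h 1

lemma stdb_one_add_stdb_two_ne_zero : stdb 1 + stdb 2 ≠ 0 := fun h => by
  simpa [stdb] using congrFun h 1

lemma nip_stdb_one_sub_stdb_two_self : nip (stdb 1 - stdb 2) (stdb 1 - stdb 2) = 0 := by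
  simp [nip, stdb]

lemma nip_stdb_one_add_stdb_two_self : nip (stdb 1 + stdb 2) (stdb 1 + stdb 2) = 0 := by
  simp [nip, stdb]

/-- Section 3.8: a Type III spacelike Osserman model of signature (2,2), given by its
components `TypeIIIComp α (√2/2)` relative to the standard basis, is not null Jordan
Osserman: for the null vectors `u = e₂ − e₃` and `v = e₂ + e₃` one has
`rank J_A(u) = 2` and `rank J_A(v) ≤ 1`. -/
theorem type_III_not_null_jordan_osserman (α : ℝ)
    (A : V4 → V4 → V4 → V4 → ℝ) (hA : IsModel A)
    (hcomp : ∀ i j k l : Fin 4,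
      A (stdb i) (stdb j) (stdb k) (stdb l)
        = TypeIIIComp α (Real.sqrt 2 / 2) i j k l) :
    (jacobi A (stdb 1 - stdb 2)).rank = 2 ∧
    (jacobi A (stdb 1 + stdb 2)).rank ≤ 1 ∧
    ¬ NullJordanOsserman A := by
  have hu : (jacobi A (stdb 1 - stdb 2)).rank = 2 := by
    rw [jacobi_sub_eq_typeIIIJacobiSub hA.1 hcomp]
    exact rank_typeIIIJacobiSub α (by positivity)
  have hv : (jacobi A (stdb 1 + stdb 2)).rank ≤ 1 := by
    rw [jacobi_add_eq_vecMulVec hA.1 hcomp]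
    exact rank_vecMulVec_le _ _
  refine ⟨hu, hv, fun hNJO => ?_⟩
  have := (hNJO _ _ stdb_one_sub_stdb_two_ne_zero stdb_one_add_stdb_two_ne_zero
    nip_stdb_one_sub_stdb_two_self nip_stdb_one_add_stdb_two_self).rank_eq
  omega
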